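/- arXiv:1910.04896 — 8 statements merged into one kernel-verified Lean document; each statement's English description precedes it below -/
import Mathlib

section
/- Let M = (m_1,...,m_s,h_1,...,h_r) be a squarefree monomial ideal with r,s ≥ 1 such that (h_1,...,h_r) is a complete intersection and codim(S/M) = r. Let M_{m_1} = (m'_2,...,m'_s,h'_1,...,h'_r), where l' = lcm(l,m_1)/m_1 for each generator l. Then codim(S/M) ≤ codim(S/M_{m_1}). -/
/-- The (monomial) codimension of the squarefree monomial ideal generated by the family `F`
of squarefree monomials (each identified with its set of variables): the minimum cardinality
of a set `X` of variables such that every generator is divisible by some variable of `X`. -/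
noncomputable def codimF {σ : Type*} [Fintype σ] [DecidableEq σ] (F : Set (Finset σ)) : ℕ :=
  sInf {c : ℕ | ∃ X : Finset σ, X.card = c ∧ ∀ g ∈ F, ∃ x ∈ X, x ∈ g}

/-- **Lemma (second part).** Let `M = (m_1,…,m_s,h_1,…,h_r)` be a squarefree monomial ideal,
minimally generated, with `r, s ≥ 1`, such that `(h_1,…,h_r)` is a complete intersection and
`codim(S/M) = r`. Let `M_{m_1} = (m'_2,…,m'_s,h'_1,…,h'_r)` where `l' = lcm(l, m_1)/m_1`
(for squarefree monomials, `l'` corresponds to the set difference `l \ m_1`).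
Then `codim(S/M) ≤ codim(S/M_{m_1})`. -/
theorem codim_le_codim_quotient_family {σ : Type*} [Fintype σ] [DecidableEq σ]
    (s r : ℕ) (hs : 0 < s) (hr : 0 < r)
    (m : Fin s → Finset σ) (h : Fin r → Finset σ)
    (hmne : ∀ i, (m i).Nonempty) (hhne : ∀ j, (h j).Nonempty)
    (hmin : ∀ a b : Fin s ⊕ Fin r, a ≠ b → ¬ Sum.elim m h a ⊆ Sum.elim m h b)
    (hCI : ∀ j j' : Fin r, j ≠ j' → Disjoint (h j) (h j'))
    (hcodim : codimF (Set.range m ∪ Set.range h) = r) :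
    codimF (Set.range m ∪ Set.range h) ≤
      codimF (((fun i => m i \ m ⟨0, hs⟩) '' {i | i ≠ ⟨0, hs⟩}) ∪
        Set.range (fun j => h j \ m ⟨0, hs⟩)) := by
  rw [hcodim]
  apply le_csInf
  · -- nonempty: X = univ works since all generators are nonempty
    refine ⟨Finset.univ.card, Finset.univ, rfl, ?_⟩
    rintro g (⟨i, hi, rfl⟩ | ⟨j, rfl⟩)
    · have := hmin (Sum.inl i) (Sum.inl ⟨0, hs⟩) (by simpa using hi)
      simp only [Sum.elim_inl] at this
      obtain ⟨x, hx1, hx2⟩ := Finset.not_subset.mp this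
      exact ⟨x, Finset.mem_univ x, Finset.mem_sdiff.mpr ⟨hx1, hx2⟩⟩
    · have := hmin (Sum.inr j) (Sum.inl ⟨0, hs⟩) (by simp)
      simp only [Sum.elim_inl, Sum.elim_inr] at this
      obtain ⟨x, hx1, hx2⟩ := Finset.not_subset.mp this
      exact ⟨x, Finset.mem_univ x, Finset.mem_sdiff.mpr ⟨hx1, hx2⟩⟩
  · rintro b ⟨X, hXcard, hX⟩
    -- pick for each j an element of X ∩ (h j \ m 0)
    have hsel : ∀ j : Fin r, ∃ x ∈ X, x ∈ h j \ m ⟨0, hs⟩ := fun j =>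
      hX _ (Or.inr ⟨j, rfl⟩)
    choose f hfX hfh using hsel
    have hinj : Function.Injective f := by
      intro j j' hjj'
      by_contra hne
      have hd := hCI j j' hne
      have h1 : f j ∈ h j := (Finset.mem_sdiff.mp (hfh j)).1
      have h2 : f j ∈ h j' := hjj' ▸ (Finset.mem_sdiff.mp (hfh j')).1
      exact (Finset.disjoint_left.mp hd h1) h2
    have : (Finset.univ : Finset (Fin r)).card ≤ X.card :=
      Finset.card_le_card_of_injOn f (fun j _ => hfX j) (hinj.injOn)
    simpa [hXcard] using this
end

section
/- Let M = (m_1,...,m_s,h_1,...,h_r) be a squarefree monomial ideal with (h_1,...,h_r) a complete intersection and codim(S/M) = r. With M_1 = (m_2,...,m_s,h_1,...,h_r) and M_{m_1} = (m'_2,...,m'_s,h'_1,...,h'_r) where l' = lcm(l,m_1)/m_1, if codim(S/M_1) < codim(S/M_{m_1}) then the set of realizations of codim(S/M) equals the set of realizations of codim(S/M_1). -/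
/-- The set of realizations of the codimension of the ideal generated by `F`. -/
noncomputable def realizations {σ : Type*} [Fintype σ] [DecidableEq σ]
    (F : Set (Finset σ)) : Set (Finset σ) :=
  {X | X.card = codimF F ∧ ∀ g ∈ F, ∃ x ∈ X, x ∈ g}

/-- Let `M = (m_1,…,m_s,h_1,…,h_r)` be a minimally generated squarefree monomial ideal with
`(h_1,…,h_r)` a complete intersection and `codim(S/M) = r`.  With
`M₁ = (m_2,…,m_s,h_1,…,h_r)` and `M_{m_1} = (m'_2,…,m'_s,h'_1,…,h'_r)` where
`l' = lcm(l,m_1)/m_1` (i.e. `l \ m_1` for squarefree monomials), if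
`codim(S/M₁) < codim(S/M_{m_1})`, then the realizations of `codim(S/M)` are exactly the
realizations of `codim(S/M₁)`. -/
theorem realizations_eq_of_codim_lt {σ : Type*} [Fintype σ] [DecidableEq σ]
    (s r : ℕ) (hs : 0 < s) (hr : 0 < r)
    (m : Fin s → Finset σ) (h : Fin r → Finset σ)
    (hmne : ∀ i, (m i).Nonempty) (hhne : ∀ j, (h j).Nonempty)
    (hmin : ∀ a b : Fin s ⊕ Fin r, a ≠ b → ¬ Sum.elim m h a ⊆ Sum.elim m h b)
    (hCI : ∀ j j' : Fin r, j ≠ j' → Disjoint (h j) (h j'))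
    (hcodim : codimF (Set.range m ∪ Set.range h) = r)
    (hlt : codimF ((m '' {i | i ≠ ⟨0, hs⟩}) ∪ Set.range h) <
      codimF (((fun i => m i \ m ⟨0, hs⟩) '' {i | i ≠ ⟨0, hs⟩}) ∪
        Set.range (fun j => h j \ m ⟨0, hs⟩))) :
    realizations (Set.range m ∪ Set.range h) =
      realizations ((m '' {i | i ≠ ⟨0, hs⟩}) ∪ Set.range h) := by
  classical
  set m0 : Fin s := ⟨0, hs⟩ with hm0
  set F : Set (Finset σ) := Set.range m ∪ Set.range h with hF
  set F₁ : Set (Finset σ) := (m '' {i | i ≠ m0}) ∪ Set.range h with hF₁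
  set F' : Set (Finset σ) := ((fun i => m i \ m m0) '' {i | i ≠ m0}) ∪
      Set.range (fun j => h j \ m m0) with hF'
  -- F₁ ⊆ F
  have hsub : F₁ ⊆ F := by
    rintro g (⟨i, _, rfl⟩ | ⟨j, rfl⟩)
    · exact Or.inl ⟨i, rfl⟩
    · exact Or.inr ⟨j, rfl⟩
  -- any hitting set of F₁ has card ≥ r
  have hitR : ∀ X : Finset σ, (∀ g ∈ F₁, ∃ x ∈ X, x ∈ g) → r ≤ X.card := by
    intro X hX
    have hX' : ∀ j : Fin r, ∃ x, x ∈ X ∧ x ∈ h j := by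
      intro j
      obtain ⟨x, hx1, hx2⟩ := hX (h j) (Or.inr ⟨j, rfl⟩)
      exact ⟨x, hx1, hx2⟩
    choose f hf1 hf2 using hX'
    have hinj : Function.Injective f := by
      intro j j' hjj
      by_contra hne
      exact (Finset.disjoint_left.mp (hCI j j' hne)) (hf2 j) (hjj ▸ hf2 j')
    have := Finset.card_le_card_of_injOn (s := (Finset.univ : Finset (Fin r))) f (fun j _ => hf1 j) hinj.injOn
    simpa using this
  -- the sets defining the codimensions are nonempty (univ hits everything)
  have hSne : {c : ℕ | ∃ X : Finset σ, X.card = c ∧ ∀ g ∈ F, ∃ x ∈ X, x ∈ g}.Nonempty := by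
    refine ⟨(Finset.univ : Finset σ).card, Finset.univ, rfl, ?_⟩
    rintro g (⟨i, rfl⟩ | ⟨j, rfl⟩)
    · obtain ⟨x, hx⟩ := hmne i; exact ⟨x, Finset.mem_univ x, hx⟩
    · obtain ⟨x, hx⟩ := hhne j; exact ⟨x, Finset.mem_univ x, hx⟩
  have hS1ne : {c : ℕ | ∃ X : Finset σ, X.card = c ∧ ∀ g ∈ F₁, ∃ x ∈ X, x ∈ g}.Nonempty := by
    obtain ⟨c, X, hc, hX⟩ := hSne
    exact ⟨c, X, hc, fun g hg => hX g (hsub hg)⟩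
  -- a hitting set of F of card r
  obtain ⟨X₀, hX₀c, hX₀⟩ : ∃ X : Finset σ, X.card = r ∧ ∀ g ∈ F, ∃ x ∈ X, x ∈ g := by
    have := Nat.sInf_mem hSne
    rw [show sInf {c : ℕ | ∃ X : Finset σ, X.card = c ∧ ∀ g ∈ F, ∃ x ∈ X, x ∈ g} = r from
      hcodim] at this
    exact this
  have hc1 : codimF F₁ = r := by
    refine le_antisymm ?_ (le_csInf hS1ne ?_)
    · exact Nat.sInf_le ⟨X₀, hX₀c, fun g hg => hX₀ g (hsub hg)⟩
    · rintro c ⟨X, hXc, hX⟩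
      exact hXc ▸ hitR X hX
  -- key: a hitting set of F₁ of card r hits m m0, hence hits F
  have key : ∀ X : Finset σ, X.card = r → (∀ g ∈ F₁, ∃ x ∈ X, x ∈ g) →
      ∀ g ∈ F, ∃ x ∈ X, x ∈ g := by
    intro X hXc hX
    have hm0hit : ∃ x ∈ X, x ∈ m m0 := by
      by_contra hno
      push_neg at hno
      have hhit' : ∀ g ∈ F', ∃ x ∈ X, x ∈ g := by
        rintro g (⟨i, hi, rfl⟩ | ⟨j, rfl⟩)
        · obtain ⟨x, hx1, hx2⟩ := hX (m i) (Or.inl ⟨i, hi, rfl⟩)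
          exact ⟨x, hx1, Finset.mem_sdiff.mpr ⟨hx2, hno x hx1⟩⟩
        · obtain ⟨x, hx1, hx2⟩ := hX (h j) (Or.inr ⟨j, rfl⟩)
          exact ⟨x, hx1, Finset.mem_sdiff.mpr ⟨hx2, hno x hx1⟩⟩
      have hle : codimF F' ≤ r := hXc ▸ Nat.sInf_le ⟨X, rfl, hhit'⟩
      rw [show codimF F₁ = r from hc1] at hlt
      exact absurd (lt_of_lt_of_le hlt hle) (lt_irrefl r)
    rintro g (⟨i, rfl⟩ | ⟨j, rfl⟩)
    · by_cases hi : i = m0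
      · exact hi ▸ hm0hit
      · exact hX (m i) (Or.inl ⟨i, hi, rfl⟩)
    · exact hX (h j) (Or.inr ⟨j, rfl⟩)
  ext X
  constructor
  · rintro ⟨hXc, hX⟩
    rw [hcodim] at hXc
    exact ⟨hc1 ▸ hXc, fun g hg => hX g (hsub hg)⟩
  · rintro ⟨hXc, hX⟩
    rw [hc1] at hXc
    exact ⟨hcodim ▸ hXc, key X hXc hX⟩
end

section
/- Let M = (m_1,...,m_s,h_1,...,h_r) be a squarefree monomial ideal with (h_1,...,h_r) a complete intersection and codim(S/M) = r ≥ 1, s ≥ 1. With M_1 and M_{m_1} as usual, if codim(S/M) = codim(S/M_1) = codim(S/M_{m_1}), then the realizations of codim(S/M) are exactly the realizations of codim(S/M_1) that are not realizations of codim(S/M_{m_1}); in particular |R(M)| = |R(M_1)| - |R(M_{m_1})|. -/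
/-- Let `M = (m_1,…,m_s,h_1,…,h_r)` be a minimally generated squarefree monomial ideal with
`(h_1,…,h_r)` a complete intersection, `r, s ≥ 1`, and `codim(S/M) = r`.  With
`M₁ = (m_2,…,m_s,h_1,…,h_r)` and `M_{m_1} = (m'_2,…,m'_s,h'_1,…,h'_r)` (`l' = lcm(l,m_1)/m_1`,
i.e. `l \ m_1`), if `codim(S/M) = codim(S/M₁) = codim(S/M_{m_1})`, then the realizations of
`codim(S/M)` are exactly those realizations of `codim(S/M₁)` which are not realizations of
`codim(S/M_{m_1})`; in particular `|R(M)| = |R(M₁)| - |R(M_{m_1})|`. -/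
theorem realizations_sdiff_of_codim_eq {σ : Type*} [Fintype σ] [DecidableEq σ]
    (s r : ℕ) (hs : 0 < s) (hr : 0 < r)
    (m : Fin s → Finset σ) (h : Fin r → Finset σ)
    (hmne : ∀ i, (m i).Nonempty) (hhne : ∀ j, (h j).Nonempty)
    (hmin : ∀ a b : Fin s ⊕ Fin r, a ≠ b → ¬ Sum.elim m h a ⊆ Sum.elim m h b)
    (hCI : ∀ j j' : Fin r, j ≠ j' → Disjoint (h j) (h j'))
    (hcodim : codimF (Set.range m ∪ Set.range h) = r)
    (heq1 : codimF ((m '' {i | i ≠ ⟨0, hs⟩}) ∪ Set.range h) =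
      codimF (Set.range m ∪ Set.range h))
    (heq2 : codimF (((fun i => m i \ m ⟨0, hs⟩) '' {i | i ≠ ⟨0, hs⟩}) ∪
        Set.range (fun j => h j \ m ⟨0, hs⟩)) =
      codimF (Set.range m ∪ Set.range h)) :
    realizations (Set.range m ∪ Set.range h) =
      realizations ((m '' {i | i ≠ ⟨0, hs⟩}) ∪ Set.range h) \
        realizations (((fun i => m i \ m ⟨0, hs⟩) '' {i | i ≠ ⟨0, hs⟩}) ∪
          Set.range (fun j => h j \ m ⟨0, hs⟩)) ∧
    ((realizations (Set.range m ∪ Set.range h)).ncard : ℤ) =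
      (realizations ((m '' {i | i ≠ ⟨0, hs⟩}) ∪ Set.range h)).ncard -
        (realizations (((fun i => m i \ m ⟨0, hs⟩) '' {i | i ≠ ⟨0, hs⟩}) ∪
          Set.range (fun j => h j \ m ⟨0, hs⟩))).ncard := by

  classical
  set i0 : Fin s := ⟨0, hs⟩ with hi0
  set m0 : Finset σ := m i0 with hm0
  -- membership characterizations
  have memF : ∀ X : Finset σ, X ∈ realizations (Set.range m ∪ Set.range h) ↔
      X.card = r ∧ (∀ i, ∃ x ∈ X, x ∈ m i) ∧ (∀ j, ∃ x ∈ X, x ∈ h j) := by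
    intro X
    simp only [realizations, Set.mem_setOf_eq, hcodim]
    constructor
    · rintro ⟨hc, hall⟩
      exact ⟨hc, fun i => hall _ (Or.inl ⟨i, rfl⟩), fun j => hall _ (Or.inr ⟨j, rfl⟩)⟩
    · rintro ⟨hc, h1, h2⟩
      refine ⟨hc, ?_⟩
      rintro g (⟨i, rfl⟩ | ⟨j, rfl⟩)
      exacts [h1 i, h2 j]
  have memF1 : ∀ X : Finset σ,
      X ∈ realizations ((m '' {i | i ≠ i0}) ∪ Set.range h) ↔
      X.card = r ∧ (∀ i, i ≠ i0 → ∃ x ∈ X, x ∈ m i) ∧ (∀ j, ∃ x ∈ X, x ∈ h j) := by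
    intro X
    simp only [realizations, Set.mem_setOf_eq, heq1.trans hcodim]
    constructor
    · rintro ⟨hc, hall⟩
      exact ⟨hc, fun i hi => hall _ (Or.inl ⟨i, hi, rfl⟩),
        fun j => hall _ (Or.inr ⟨j, rfl⟩)⟩
    · rintro ⟨hc, h1, h2⟩
      refine ⟨hc, ?_⟩
      rintro g (⟨i, hi, rfl⟩ | ⟨j, rfl⟩)
      exacts [h1 i hi, h2 j]
  have memF2 : ∀ X : Finset σ,
      X ∈ realizations (((fun i => m i \ m0) '' {i | i ≠ i0}) ∪
        Set.range (fun j => h j \ m0)) ↔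
      X.card = r ∧ (∀ i, i ≠ i0 → ∃ x ∈ X, x ∈ m i \ m0) ∧
        (∀ j, ∃ x ∈ X, x ∈ h j \ m0) := by
    intro X
    simp only [realizations, Set.mem_setOf_eq, heq2.trans hcodim]
    constructor
    · rintro ⟨hc, hall⟩
      exact ⟨hc, fun i hi => hall _ (Or.inl ⟨i, hi, rfl⟩),
        fun j => hall _ (Or.inr ⟨j, rfl⟩)⟩
    · rintro ⟨hc, h1, h2⟩
      refine ⟨hc, ?_⟩
      rintro g (⟨i, hi, rfl⟩ | ⟨j, rfl⟩)
      exacts [h1 i hi, h2 j]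
  -- structure lemma: a set of card r hitting all h j has exactly one point in each h j
  have key : ∀ X : Finset σ, X.card = r → (∀ j, ∃ x ∈ X, x ∈ h j) →
      (∀ x ∈ X, ∃ j, x ∈ h j) ∧
      (∀ j : Fin r, ∀ x ∈ X, ∀ y ∈ X, x ∈ h j → y ∈ h j → x = y) := by
    intro X hcard hhit
    set f : Fin r → Finset σ := fun j => X ∩ h j with hf
    have hfne : ∀ j, 1 ≤ (f j).card := by
      intro j
      obtain ⟨x, hxX, hxh⟩ := hhit j
      have : x ∈ f j := Finset.mem_inter.mpr ⟨hxX, hxh⟩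
      exact Finset.card_pos.mpr ⟨x, this⟩
    have hdisj : ∀ j ∈ (Finset.univ : Finset (Fin r)), ∀ j' ∈ Finset.univ, j ≠ j' →
        Disjoint (f j) (f j') := by
      intro j _ j' _ hjj'
      exact Finset.disjoint_of_subset_left Finset.inter_subset_right
        (Finset.disjoint_of_subset_right Finset.inter_subset_right (hCI j j' hjj'))
    have hbcard : (Finset.univ.biUnion f).card = ∑ j, (f j).card :=
      Finset.card_biUnion hdisj
    have hbsub : Finset.univ.biUnion f ⊆ X := by
      intro x hx
      obtain ⟨j, _, hxj⟩ := Finset.mem_biUnion.mp hx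
      exact (Finset.mem_inter.mp hxj).1
    have hsumle : ∑ j, (f j).card ≤ r := by
      have := Finset.card_le_card hbsub
      omega
    have hrle : r ≤ ∑ j, (f j).card := by
      calc r = ∑ _j : Fin r, 1 := by simp
        _ ≤ ∑ j, (f j).card := Finset.sum_le_sum (fun j _ => hfne j)
    have hXeq : X = Finset.univ.biUnion f := by
      apply (Finset.eq_of_subset_of_card_le hbsub ?_).symm
      rw [hbcard, hcard]; exact hrle
    have hcard1 : ∀ j, (f j).card ≤ 1 := by
      intro j0
      have hsplit : (f j0).card + ∑ j ∈ Finset.univ.erase j0, (f j).card =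
          ∑ j, (f j).card := Finset.add_sum_erase Finset.univ (fun j => (f j).card)
            (Finset.mem_univ j0)
      have herase : (r - 1 : ℕ) ≤ ∑ j ∈ Finset.univ.erase j0, (f j).card := by
        calc (r - 1 : ℕ) = (Finset.univ.erase j0).card := by
              rw [Finset.card_erase_of_mem (Finset.mem_univ j0), Finset.card_univ,
                Fintype.card_fin]
          _ = ∑ _j ∈ Finset.univ.erase j0, 1 := by simp
          _ ≤ _ := Finset.sum_le_sum (fun j _ => hfne j)
      omega
    constructor
    · intro x hx
      rw [hXeq] at hx
      obtain ⟨j, _, hxj⟩ := Finset.mem_biUnion.mp hx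
      exact ⟨j, (Finset.mem_inter.mp hxj).2⟩
    · intro j x hxX y hyX hxh hyh
      exact Finset.card_le_one.mp (hcard1 j) x (Finset.mem_inter.mpr ⟨hxX, hxh⟩)
        y (Finset.mem_inter.mpr ⟨hyX, hyh⟩)
  -- the set equality
  have hseteq : realizations (Set.range m ∪ Set.range h) =
      realizations ((m '' {i | i ≠ i0}) ∪ Set.range h) \
        realizations (((fun i => m i \ m0) '' {i | i ≠ i0}) ∪
          Set.range (fun j => h j \ m0)) := by
    ext X
    rw [Set.mem_diff, memF, memF1, memF2]
    constructor
    · rintro ⟨hc, hm, hh⟩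
      refine ⟨⟨hc, fun i _ => hm i, hh⟩, ?_⟩
      rintro ⟨-, -, hh2⟩
      obtain ⟨hall, huniq⟩ := key X hc hh
      obtain ⟨x, hxX, hxm0⟩ := hm i0
      obtain ⟨j, hxj⟩ := hall x hxX
      obtain ⟨y, hyX, hyj⟩ := hh2 j
      rw [Finset.mem_sdiff] at hyj
      exact hyj.2 (huniq j y hyX x hxX hyj.1 hxj ▸ hxm0)
    · rintro ⟨⟨hc, hm1, hh⟩, hnot⟩
      have hhitm0 : ∃ x ∈ X, x ∈ m0 := by
        by_contra hno
        push_neg at hno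
        apply hnot
        refine ⟨hc, ?_, ?_⟩
        · intro i hi
          obtain ⟨x, hxX, hxm⟩ := hm1 i hi
          exact ⟨x, hxX, Finset.mem_sdiff.mpr ⟨hxm, hno x hxX⟩⟩
        · intro j
          obtain ⟨x, hxX, hxh⟩ := hh j
          exact ⟨x, hxX, Finset.mem_sdiff.mpr ⟨hxh, hno x hxX⟩⟩
      refine ⟨hc, fun i => ?_, hh⟩
      by_cases hi : i = i0
      · exact hi ▸ hhitm0
      · exact hm1 i hi
  refine ⟨hseteq, ?_⟩
  have hsub : realizations (((fun i => m i \ m0) '' {i | i ≠ i0}) ∪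
        Set.range (fun j => h j \ m0)) ⊆
      realizations ((m '' {i | i ≠ i0}) ∪ Set.range h) := by
    intro X hX
    rw [memF2] at hX
    obtain ⟨hc, h1, h2⟩ := hX
    rw [memF1]
    refine ⟨hc, fun i hi => ?_, fun j => ?_⟩
    · obtain ⟨x, hxX, hx⟩ := h1 i hi
      exact ⟨x, hxX, (Finset.mem_sdiff.mp hx).1⟩
    · obtain ⟨x, hxX, hx⟩ := h2 j
      exact ⟨x, hxX, (Finset.mem_sdiff.mp hx).1⟩
  have hfin : (realizations ((m '' {i | i ≠ i0}) ∪ Set.range h)).Finite :=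
    Set.toFinite _
  have h3 := Set.ncard_diff_add_ncard_of_subset hsub hfin
  rw [hseteq, ← h3]
  push_cast
  ring
end

section
/- For any finite simple graph G, the chromatic ideal M_G is minimally generated by exactly n monomials, where n is the number of vertices of G; moreover for distinct vertices i, j, the generators m_i and m_j have gcd equal to 1 if and only if {i,j} is an edge of G. -/
/-- A finite set of vertices is independent: no edge has both endpoints in it. -/
def Indep {V : Type*} (G : SimpleGraph V) (s : Finset V) : Prop :=
  ∀ a ∈ s, ∀ b ∈ s, ¬ G.Adj a b

/-- A maximal independent set. -/
def MaxIndep {V : Type*} (G : SimpleGraph V) (s : Finset V) : Prop :=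
  Indep G s ∧ ∀ t : Finset V, s ⊂ t → ¬ Indep G t

/-- `Γ`: the index set of the variables of the chromatic ideal `M_G`, consisting of all
singletons of vertices together with all maximal independent sets. -/
def Gamma {V : Type*} (G : SimpleGraph V) : Set (Finset V) :=
  {ω | (∃ i : V, ω = {i}) ∨ MaxIndep G ω}

/-- The generator `m_i = ∏_{ω ∈ Γ, i ∈ ω} x_ω` of the chromatic ideal `M_G`, a squarefree
monomial identified with its set of variables `{x_ω : ω ∈ Γ, i ∈ ω}`. -/
def gen {V : Type*} (G : SimpleGraph V) (i : V) : Set (Finset V) :=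
  {ω ∈ Gamma G | i ∈ ω}

/-- **Proposition.** The chromatic ideal `M_G` is minimally generated by exactly `n`
monomials, one per vertex (distinct generators, none dividing another); and for distinct
vertices `i, j`, `gcd(m_i, m_j) = 1` iff `{i,j}` is an edge of `G`. -/
theorem chromaticIdeal_minimal_generation {V : Type*} [Fintype V] [DecidableEq V]
    (G : SimpleGraph V) :
    Function.Injective (gen G) ∧
    (∀ i j : V, i ≠ j → ¬ gen G i ⊆ gen G j) ∧
    (∀ i j : V, i ≠ j → (gen G i ∩ gen G j = ∅ ↔ G.Adj i j)) := by
  have hsingle : ∀ i : V, ({i} : Finset V) ∈ gen G i := by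
    intro i
    exact ⟨Or.inl ⟨i, rfl⟩, Finset.mem_singleton_self i⟩
  have hmem : ∀ i j : V, ({i} : Finset V) ∈ gen G j → j = i := by
    intro i j hj
    exact Finset.mem_singleton.mp hj.2
  have hext : ∀ s : Finset V, Indep G s → ∃ t : Finset V, s ⊆ t ∧ MaxIndep G t := by
    intro s hs
    have hfin : {t : Finset V | Indep G t ∧ s ⊆ t}.Finite := Set.toFinite _
    obtain ⟨t, ht, hmax⟩ :=
      hfin.exists_maximalFor (fun t => t.card) _ ⟨s, hs, subset_rfl⟩
    refine ⟨t, ht.2, ht.1, ?_⟩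
    intro u htu hu
    have hus : u ∈ {t : Finset V | Indep G t ∧ s ⊆ t} :=
      ⟨hu, ht.2.trans htu.subset⟩
    have hcard := Finset.card_lt_card htu
    have := hmax hus (le_of_lt hcard)
    simp only at this
    omega
  refine ⟨?_, ?_, ?_⟩
  · intro i j h
    exact (hmem i j (h ▸ hsingle i)).symm
  · intro i j hij hsub
    exact hij (hmem i j (hsub (hsingle i))).symm
  · intro i j hij
    constructor
    · intro hempty
      by_contra hadj
      have hind : Indep G ({i, j} : Finset V) := by
        intro a ha b hb hab
        have ha' : a = i ∨ a = j := by simpa using ha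
        have hb' : b = i ∨ b = j := by simpa using hb
        rcases ha' with rfl | rfl <;> rcases hb' with rfl | rfl <;>
          first
          | exact G.irrefl hab
          | exact hadj hab
          | exact hadj (G.adj_symm hab)
      obtain ⟨t, hst, hmax⟩ := hext _ hind
      have hit : i ∈ t := hst (Finset.mem_insert_self i {j})
      have hjt : j ∈ t := hst (Finset.mem_insert.mpr (Or.inr (Finset.mem_singleton_self j)))
      have : t ∈ gen G i ∩ gen G j := ⟨⟨Or.inr hmax, hit⟩, ⟨Or.inr hmax, hjt⟩⟩
      rw [hempty] at this
      exact this
    · intro hadj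
      ext ω
      simp only [Set.mem_inter_iff, Set.mem_empty_iff_false, iff_false]
      rintro ⟨⟨hω, hiω⟩, ⟨_, hjω⟩⟩
      rcases hω with ⟨k, rfl⟩ | hmax
      · exact hij (Finset.mem_singleton.mp hiω ▸ (Finset.mem_singleton.mp hjω).symm ▸ rfl)
      · exact hmax.1 i hiω j hjω hadj
end

section
/- For an arbitrary finite simple graph G, the chromatic number of G equals the codimension of S/M_G, where M_G is the chromatic ideal of G. -/
/-- The codimension of `S/M_G`: the minimum cardinality of a set `X` of variables
(indexed by elements of `Γ`) such that every generator `m_i` of the chromatic ideal is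
divisible by some variable of `X`. -/
noncomputable def codimMG {V : Type*} [Fintype V] [DecidableEq V] (G : SimpleGraph V) : ℕ :=
  sInf {c : ℕ | ∃ X : Finset (Finset V), ↑X ⊆ Gamma G ∧ X.card = c ∧
    ∀ i : V, ∃ ω ∈ X, i ∈ ω}

/-- Every element of `Γ` is an independent set. -/
lemma indep_of_mem_Gamma {V : Type*} {G : SimpleGraph V} {ω : Finset V}
    (h : ω ∈ Gamma G) : Indep G ω := by
  rcases h with ⟨i, rfl⟩ | hm
  · intro a ha b hb hab
    simp only [Finset.mem_singleton] at ha hb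
    subst ha; subst hb
    exact G.irrefl hab
  · exact hm.1

/-- Every independent set extends to a maximal independent set. -/
lemma exists_maxIndep {V : Type*} [Fintype V] {G : SimpleGraph V} {s : Finset V}
    (hs : Indep G s) : ∃ m : Finset V, s ⊆ m ∧ MaxIndep G m := by
  have hfin : ({t : Finset V | s ⊆ t ∧ Indep G t}).Finite := Set.toFinite _
  obtain ⟨m, hm, hmax⟩ : ∃ m ∈ {t : Finset V | s ⊆ t ∧ Indep G t},
      ∀ t ∈ {t : Finset V | s ⊆ t ∧ Indep G t}, id m ≤ id t → id m = id t := by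
    obtain ⟨m, hm, hmx⟩ := hfin.exists_maximal ⟨s, Finset.Subset.refl s, hs⟩
    exact ⟨m, hm, fun t ht hle => le_antisymm hle (hmx ht hle)⟩
  refine ⟨m, hm.1, hm.2, fun t hst hit => ?_⟩
  have := hmax t ⟨hm.1.trans hst.subset, hit⟩ hst.subset
  simp only [id] at this
  exact hst.ne this

lemma codim_set_nonempty {V : Type*} [Fintype V] [DecidableEq V] (G : SimpleGraph V) :
    {c : ℕ | ∃ X : Finset (Finset V), ↑X ⊆ Gamma G ∧ X.card = c ∧
      ∀ i : V, ∃ ω ∈ X, i ∈ ω}.Nonempty := by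
  refine ⟨_, (Finset.univ : Finset V).image (fun i => ({i} : Finset V)), ?_, rfl, ?_⟩
  · intro ω hω
    simp only [Finset.coe_image, Set.mem_image] at hω
    obtain ⟨i, _, rfl⟩ := hω
    exact Or.inl ⟨i, rfl⟩
  · intro i
    exact ⟨{i}, Finset.mem_image_of_mem _ (Finset.mem_univ i), Finset.mem_singleton_self i⟩

lemma colorable_codim {V : Type*} [Fintype V] [DecidableEq V] (G : SimpleGraph V) :
    G.Colorable (codimMG G) := by
  obtain ⟨X, hXΓ, hcard, hcov⟩ := Nat.sInf_mem (codim_set_nonempty G)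
  have : Fintype.card ↥X = codimMG G := by rw [Fintype.card_coe]; exact hcard
  rw [← this]
  choose f hf hfi using hcov
  exact (SimpleGraph.Coloring.mk (fun v => (⟨f v, hf v⟩ : ↥X))
    (by
      intro v w hvw heq
      have hfw : f v = f w := congrArg Subtype.val heq
      have hΓ : (f v : Finset V) ∈ Gamma G := hXΓ (hf v)
      exact indep_of_mem_Gamma hΓ _ (hfi v) _ (hfw ▸ hfi w) hvw)).colorable

lemma codim_le_of_colorable {V : Type*} [Fintype V] [DecidableEq V] {G : SimpleGraph V}
    {n : ℕ} (h : G.Colorable n) : codimMG G ≤ n := by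
  obtain ⟨C⟩ := h
  -- extend each color class to a maximal independent set
  have hcls : ∀ j : Fin n, Indep G (Finset.univ.filter (fun v => C v = j)) := by
    intro j a ha b hb hab
    simp only [Finset.mem_filter] at ha hb
    exact C.valid hab (ha.2.trans hb.2.symm)
  choose m hm hmax using fun j => exists_maxIndep (hcls j)
  set X : Finset (Finset V) := (Finset.univ : Finset (Fin n)).image m with hX
  have hmem : codimMG G ≤ X.card := by
    apply Nat.sInf_le
    refine ⟨X, ?_, rfl, ?_⟩
    · intro ω hω
      simp only [hX, Finset.coe_image, Set.mem_image] at hω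
      obtain ⟨j, _, rfl⟩ := hω
      exact Or.inr (hmax j)
    · intro i
      refine ⟨m (C i), Finset.mem_image_of_mem _ (Finset.mem_univ _), hm (C i) ?_⟩
      simp
  calc codimMG G ≤ X.card := hmem
    _ ≤ (Finset.univ : Finset (Fin n)).card := Finset.card_image_le
    _ = n := by simp

/-- **Theorem.** For an arbitrary graph `G`, `χ(G) = codim(S/M_G)`. -/
theorem chromaticNumber_eq_codim {V : Type*} [Fintype V] [DecidableEq V]
    (G : SimpleGraph V) :
    G.chromaticNumber = (codimMG G : ℕ∞) := by
  have hne : G.chromaticNumber ≠ ⊤ :=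
    SimpleGraph.chromaticNumber_ne_top_iff_exists.2 ⟨_, G.colorable_of_fintype⟩
  have h1 : G.chromaticNumber ≤ (codimMG G : ℕ∞) :=
    (colorable_codim G).chromaticNumber_le
  have h2 : codimMG G ≤ (G.chromaticNumber).toNat :=
    codim_le_of_colorable G.colorable_chromaticNumber_of_fintype
  refine le_antisymm h1 ?_
  calc (codimMG G : ℕ∞) ≤ ((G.chromaticNumber).toNat : ℕ∞) := by exact_mod_cast h2
    _ = G.chromaticNumber := ENat.coe_toNat hne
end

section
/- Let G be a graph that is a union of finitely many k-cliques and suppose χ(G) = k. Then the map sending a partition {W_1,...,W_k} of the vertex set V into k independent sets to the set of variables {x_{W_1},...,x_{W_k}} is a bijection between the set of partitions of V into k independent sets and the set of realizations of codim(S/M_G). In particular, each W_i in such a partition is a maximal independent set. -/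
/-- A realization of `codim(S/M_G)`: a set of variables of cardinality `codim(S/M_G)`
such that every generator of `M_G` is divisible by some variable of the set. -/
def IsRealization {V : Type*} [Fintype V] [DecidableEq V] (G : SimpleGraph V)
    (X : Finset (Finset V)) : Prop :=
  ↑X ⊆ Gamma G ∧ X.card = codimMG G ∧ ∀ i : V, ∃ ω ∈ X, i ∈ ω

/-- A partition of the vertex set into `k` independent sets. -/
def IsPartitionIndep {V : Type*} (G : SimpleGraph V) (k : ℕ) (P : Finset (Finset V)) : Prop :=
  P.card = k ∧ (∀ v : V, ∃! W, W ∈ P ∧ v ∈ W) ∧ ∀ W ∈ P, Indep G W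

lemma exists_maxIndep_superset {V : Type*} [Fintype V] [DecidableEq V] (G : SimpleGraph V)
    (s : Finset V) (hs : Indep G s) : ∃ m, s ⊆ m ∧ MaxIndep G m := by
  classical
  have hne : (Finset.univ.powerset.filter (fun t => s ⊆ t ∧ Indep G t)).Nonempty :=
    ⟨s, by simp [hs]⟩
  obtain ⟨m, hm, hmax⟩ := Finset.exists_max_image _ Finset.card hne
  simp only [Finset.mem_filter, Finset.mem_powerset] at hm
  refine ⟨m, hm.2.1, hm.2.2, fun u hu hindu => ?_⟩
  have hle : u.card ≤ m.card := by
    have := hmax u (by simp [Finset.mem_filter, hm.2.1.trans hu.subset, hindu])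
    simpa using this
  exact absurd (Finset.card_lt_card hu) (not_lt.mpr hle)


/-- **Key bijection.** Let `G` be a union of finitely many `k`-cliques with `χ(G) = k`.
Then the map `{W_1,…,W_k} ↦ {x_{W_1},…,x_{W_k}}` is a bijection between partitions of `V`
into `k` independent sets and realizations of `codim(S/M_G)` (with variables indexed by
vertex sets, the map is the identification `W ↦ x_W`, so the two collections coincide).
In particular each `W_i` of such a partition is a maximal independent set. -/
theorem partition_bij_realization {V : Type*} [Fintype V] [DecidableEq V]
    (G : SimpleGraph V) (k r : ℕ) (K : Fin r → Finset V)
    (hcard : ∀ t, (K t).card = k)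
    (hclique : ∀ t, ∀ a ∈ K t, ∀ b ∈ K t, a ≠ b → G.Adj a b)
    (hvert : ∀ v : V, ∃ t, v ∈ K t)
    (hedge : ∀ u v : V, G.Adj u v → ∃ t, u ∈ K t ∧ v ∈ K t)
    (hchi : G.chromaticNumber = (k : ℕ∞)) :
    (∀ P : Finset (Finset V), IsPartitionIndep G k P ↔ IsRealization G P) ∧
    (∀ P : Finset (Finset V), IsPartitionIndep G k P → ∀ W ∈ P, MaxIndep G W) := by
  classical
  have hGindep : ∀ ω ∈ Gamma G, Indep G ω := by
    rintro ω (⟨i, rfl⟩ | h)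
    · intro a ha b hb
      rw [Finset.mem_singleton] at ha hb
      intro hadj; rw [ha, hb] at hadj; exact G.loopless.irrefl i hadj
    · exact h.1
  have hGone : ∀ ω ∈ Gamma G, ∀ t : Fin r, ∀ a ∈ ω, ∀ b ∈ ω, a ∈ K t → b ∈ K t → a = b := by
    intro ω hω t a ha b hb haK hbK
    by_contra hab
    exact hGindep ω hω a ha b hb (hclique t a haK b hbK hab)
  by_cases hV : Nonempty V
  case neg =>
    -- V is empty
    have hVe : IsEmpty V := not_nonempty_iff.mp hV
    have hk0 : k = 0 := by
      have h0 : G.chromaticNumber = 0 := SimpleGraph.chromaticNumber_eq_zero_of_isEmpty (G := G)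
      rw [h0] at hchi
      exact_mod_cast hchi.symm
    have hcodim : codimMG G = 0 := by
      apply Nat.eq_zero_of_le_zero
      apply Nat.sInf_le
      exact ⟨∅, by simp, Finset.card_empty, fun i => isEmptyElim i⟩
    constructor
    · intro P
      constructor
      · rintro ⟨hPcard, -, -⟩
        have hPe : P = ∅ := Finset.card_eq_zero.mp (by rw [hPcard, hk0])
        subst hPe
        exact ⟨by simp, by simp [hcodim], fun i => isEmptyElim i⟩
      · rintro ⟨-, hPcard, -⟩
        have hPe : P = ∅ := Finset.card_eq_zero.mp (by rw [hPcard, hcodim])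
        subst hPe
        exact ⟨by simp [hk0], fun v => isEmptyElim v, fun W hW => absurd hW (by simp)⟩
    · rintro P ⟨hPcard, -, -⟩ W hW
      have hPe : P = ∅ := Finset.card_eq_zero.mp (by rw [hPcard, hk0])
      subst hPe
      exact absurd hW (by simp)
  case pos =>
    obtain ⟨v₀⟩ := hV
    obtain ⟨t₀, -⟩ := hvert v₀
    -- lower bound: any covering subset of Gamma has at least k elements
    have hlow : ∀ X : Finset (Finset V), ↑X ⊆ Gamma G → (∀ i : V, ∃ ω ∈ X, i ∈ ω) →
        k ≤ X.card := by
      intro X hXG hcov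
      choose f hfX hfw using hcov
      have hle : (K t₀).card ≤ X.card := by
        apply Finset.card_le_card_of_injOn f (fun w _ => hfX w)
        intro a ha b hb hfab
        exact hGone (f a) (hXG (hfX a)) t₀ a (hfw a) b (hfab ▸ hfw b) ha hb
      rwa [hcard t₀] at hle
    -- upper bound construction from a k-coloring
    have hcol : G.Colorable k := SimpleGraph.chromaticNumber_le_iff_colorable.mp (le_of_eq hchi)
    obtain ⟨C⟩ := hcol
    have hclass : ∀ c : Fin k, Indep G (Finset.univ.filter (fun v => C v = c)) := by
      intro c a ha b hb hab
      rw [Finset.mem_filter] at ha hb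
      exact C.valid hab (ha.2.trans hb.2.symm)
    choose M hM hMmax using fun c : Fin k =>
      exists_maxIndep_superset G (Finset.univ.filter (fun v => C v = c)) (hclass c)
    set X₀ : Finset (Finset V) := Finset.image M Finset.univ with hX₀def
    have hX₀G : ↑X₀ ⊆ Gamma G := by
      intro ω hω
      rw [hX₀def] at hω
      simp only [Finset.coe_image, Set.mem_image] at hω
      obtain ⟨c, -, rfl⟩ := hω
      exact Or.inr (hMmax c)
    have hX₀cov : ∀ i : V, ∃ ω ∈ X₀, i ∈ ω := by
      intro i
      refine ⟨M (C i), Finset.mem_image_of_mem M (Finset.mem_univ (C i)), ?_⟩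
      exact hM (C i) (by simp)
    have hX₀card : X₀.card = k := by
      apply le_antisymm
      · exact Finset.card_image_le.trans (by simp)
      · exact hlow X₀ hX₀G hX₀cov
    have hcodim : codimMG G = k := by
      apply le_antisymm
      · exact Nat.sInf_le ⟨X₀, hX₀G, hX₀card, hX₀cov⟩
      · refine le_csInf ⟨k, X₀, hX₀G, hX₀card, hX₀cov⟩ ?_
        rintro c ⟨X, hXG, rfl, hcov⟩
        exact hlow X hXG hcov
    -- structure: in a covering of cardinality k, each vertex lies in a unique member
    have hstruct : ∀ X : Finset (Finset V), ↑X ⊆ Gamma G → X.card = k →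
        (∀ i : V, ∃ ω ∈ X, i ∈ ω) →
        ∀ v : V, ∀ ω₁ ∈ X, ∀ ω₂ ∈ X, v ∈ ω₁ → v ∈ ω₂ → ω₁ = ω₂ := by
      intro X hXG hXcard hcov v ω₁ h1 ω₂ h2 hv1 hv2
      obtain ⟨t, hvt⟩ := hvert v
      choose f hfX hfw using hcov
      have hinj : Set.InjOn f ↑(K t) := by
        intro a ha b hb hfab
        exact hGone (f a) (hXG (hfX a)) t a (hfw a) b (hfab ▸ hfw b) ha hb
      have himg : Finset.image f (K t) = X := by
        apply Finset.eq_of_subset_of_card_le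
        · intro ω hω
          obtain ⟨w, -, rfl⟩ := Finset.mem_image.mp hω
          exact hfX w
        · rw [hXcard, Finset.card_image_of_injOn hinj, hcard t]
      obtain ⟨w₁, hw₁, rfl⟩ := Finset.mem_image.mp (himg ▸ h1)
      obtain ⟨w₂, hw₂, rfl⟩ := Finset.mem_image.mp (himg ▸ h2)
      have e1 : w₁ = v := hGone (f w₁) (hXG (hfX w₁)) t w₁ (hfw w₁) v hv1 hw₁ hvt
      have e2 : w₂ = v := hGone (f w₂) (hXG (hfX w₂)) t w₂ (hfw w₂) v hv2 hw₂ hvt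
      rw [e1, e2]
    -- partitions are transversal to every clique
    have htrans : ∀ P : Finset (Finset V), IsPartitionIndep G k P →
        ∀ W ∈ P, ∀ t : Fin r, ∃ w ∈ K t, w ∈ W := by
      rintro P ⟨hPcard, hPcov, hPind⟩ W hW t
      choose g hg using fun v => (hPcov v).exists
      have hinj : Set.InjOn g ↑(K t) := by
        intro a ha b hb hgab
        by_contra hab
        exact hPind (g a) (hg a).1 a (hg a).2 b (hgab ▸ (hg b).2) (hclique t a ha b hb hab)
      have himg : Finset.image g (K t) = P := by
        apply Finset.eq_of_subset_of_card_le
        · intro ω hω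
          obtain ⟨w, -, rfl⟩ := Finset.mem_image.mp hω
          exact (hg w).1
        · rw [hPcard, Finset.card_image_of_injOn hinj, hcard t]
      obtain ⟨w, hw, hgw⟩ := Finset.mem_image.mp (himg ▸ hW)
      exact ⟨w, hw, hgw ▸ (hg w).2⟩
    -- maximality of partition classes
    have hmaxpart : ∀ P : Finset (Finset V), IsPartitionIndep G k P →
        ∀ W ∈ P, MaxIndep G W := by
      intro P hP W hW
      refine ⟨hP.2.2 W hW, fun u hu hindu => ?_⟩
      obtain ⟨v, hvu, hvW⟩ := Finset.exists_of_ssubset hu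
      obtain ⟨t, hvt⟩ := hvert v
      obtain ⟨w, hwK, hwW⟩ := htrans P hP W hW t
      have hwv : w ≠ v := fun h => hvW (h ▸ hwW)
      exact hindu w (hu.subset hwW) v hvu (hclique t w hwK v hvt hwv)
    refine ⟨fun P => ⟨fun hP => ?_, fun hX => ?_⟩, hmaxpart⟩
    · obtain ⟨hPcard, hPcov, hPind⟩ := hP
      refine ⟨?_, hPcard.trans hcodim.symm, fun i => ?_⟩
      · intro W hW
        exact Or.inr (hmaxpart P ⟨hPcard, hPcov, hPind⟩ W (Finset.mem_coe.mp hW))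
      · obtain ⟨W, ⟨hWP, hWi⟩, -⟩ := hPcov i
        exact ⟨W, hWP, hWi⟩
    · obtain ⟨hXG, hXcard, hXcov⟩ := hX
      have hXk : P.card = k := hXcard.trans hcodim
      refine ⟨hXk, fun v => ?_, fun W hW => hGindep W (hXG (Finset.mem_coe.mpr hW))⟩
      obtain ⟨ω, hω, hvω⟩ := hXcov v
      exact ⟨ω, ⟨hω, hvω⟩, fun ω' ⟨hω', hvω'⟩ =>
        hstruct P hXG hXk hXcov v ω' hω' ω hω hvω' hvω⟩
end

section
/- Let k be odd and let G be a graph obtained as the union of k+1 k-cliques such that (i) the k-cliques intersect pairwise in at most one vertex, and (ii) every vertex of G belongs to at most 2 of the k-cliques. Then χ(G) = k. -/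
open Finset

section Pc
variable (k : ℕ)

/-- proper edge coloring of `K_{k+1}` (k odd) with k colors -/
def pc (a b : Fin (k+1)) : ZMod k :=
  if a.val = k then 2 * (b.val : ZMod k)
  else if b.val = k then 2 * (a.val : ZMod k)
  else (a.val : ZMod k) + (b.val : ZMod k)

lemma pc_symm {a b : Fin (k+1)} (hab : a ≠ b) : pc k a b = pc k b a := by
  unfold pc
  by_cases ha : a.val = k
  · by_cases hb : b.val = k
    · exact absurd (Fin.ext (ha.trans hb.symm)) hab
    · simp [ha, hb]
  · by_cases hb : b.val = k
    · simp [ha, hb]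
    · simp only [if_neg ha, if_neg hb]; ring

lemma two_mul_cancel (hk : Odd k) {a b : ZMod k} (h : 2 * a = 2 * b) : a = b := by
  obtain ⟨m, hm⟩ := hk
  have h1 : ((m+1 : ℕ) : ZMod k) * 2 = 1 := by
    have e1 : ((m+1 : ℕ) : ZMod k) * 2 = ((k : ℕ) : ZMod k) + 1 := by
      have : (m+1) * 2 = k + 1 := by omega
      calc ((m+1 : ℕ) : ZMod k) * 2 = (((m+1)*2 : ℕ) : ZMod k) := by push_cast; ring
        _ = ((k+1 : ℕ) : ZMod k) := by rw [this]
        _ = ((k : ℕ) : ZMod k) + 1 := by push_cast; ring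
    rw [e1, ZMod.natCast_self, zero_add]
  calc a = (((m+1:ℕ) : ZMod k) * 2) * a := by rw [h1, one_mul]
    _ = ((m+1:ℕ) : ZMod k) * (2 * a) := by ring
    _ = ((m+1:ℕ) : ZMod k) * (2 * b) := by rw [h]
    _ = (((m+1:ℕ) : ZMod k) * 2) * b := by ring
    _ = b := by rw [h1, one_mul]

lemma natCast_inj_of_lt [NeZero k] {a b : ℕ} (ha : a < k) (hb : b < k)
    (h : (a : ZMod k) = (b : ZMod k)) : a = b := by
  have := ZMod.val_natCast_of_lt ha
  have hb' := ZMod.val_natCast_of_lt hb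
  rw [h] at this; omega

lemma pc_inj (hk : Odd k) [NeZero k] {a b c : Fin (k+1)} (hab : a ≠ b) (hac : a ≠ c)
    (hbc : b ≠ c) : pc k a b ≠ pc k a c := by
  intro h
  have hva : a.val < k + 1 := a.isLt
  have hvb : b.val < k + 1 := b.isLt
  have hvc : c.val < k + 1 := c.isLt
  have hvab : a.val ≠ b.val := fun e => hab (Fin.ext e)
  have hvac : a.val ≠ c.val := fun e => hac (Fin.ext e)
  have hvbc : b.val ≠ c.val := fun e => hbc (Fin.ext e)
  unfold pc at h
  by_cases ha : a.val = k
  · have hb : b.val ≠ k := fun e => hvab (ha.trans e.symm)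
    have hc : c.val ≠ k := fun e => hvac (ha.trans e.symm)
    rw [if_pos ha, if_pos ha] at h
    exact hvbc (natCast_inj_of_lt k (by omega) (by omega) (two_mul_cancel k hk h))
  · rw [if_neg ha, if_neg ha] at h
    by_cases hb : b.val = k
    · have hc : c.val ≠ k := fun e => hvbc (hb.trans e.symm)
      rw [if_pos hb, if_neg hc, two_mul] at h
      exact hvac (natCast_inj_of_lt k (by omega) (by omega) (add_left_cancel h))
    · by_cases hc : c.val = k
      · rw [if_neg hb, if_pos hc, two_mul] at h
        exact hvab (natCast_inj_of_lt k (by omega) (by omega) (add_left_cancel h.symm))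
      · rw [if_neg hb, if_neg hc] at h
        exact hvbc (natCast_inj_of_lt k (by omega) (by omega) (add_left_cancel h))
end Pc

section Col
set_option linter.unusedSectionVars false
variable {V : Type*} [Fintype V] [DecidableEq V] (k : ℕ) (K : Fin (k+1) → Finset V)

def Tset (v : V) : Finset (Fin (k+1)) := univ.filter fun t => v ∈ K t

lemma mem_Tset {t : Fin (k+1)} {v : V} : t ∈ Tset k K v ↔ v ∈ K t := by simp [Tset]

noncomputable def sc (v : V) : ZMod k :=
  if h : 1 < (Tset k K v).card then
    pc k ((Tset k K v).min' (card_pos.mp (by omega))) ((Tset k K v).max' (card_pos.mp (by omega)))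
  else 0

lemma sc_pair {v : V} {t t' : Fin (k+1)} (hne : t ≠ t') (h : Tset k K v = {t, t'}) :
    sc k K v = pc k t t' := by
  have hc : (Tset k K v).card = 2 := by rw [h]; exact card_pair hne
  have h2 : 1 < (Tset k K v).card := by omega
  rw [sc, dif_pos h2]
  have hne' : (Tset k K v).min' (card_pos.mp (by omega)) ≠
      (Tset k K v).max' (card_pos.mp (by omega)) := (min'_lt_max'_of_card _ h2).ne
  have hm : (Tset k K v).min' (card_pos.mp (by omega)) ∈ ({t, t'} : Finset _) :=
    h ▸ min'_mem _ _
  have hM : (Tset k K v).max' (card_pos.mp (by omega)) ∈ ({t, t'} : Finset _) :=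
    h ▸ max'_mem _ _
  simp only [mem_insert, mem_singleton] at hm hM
  rcases hm with h1 | h1 <;> rcases hM with h2' | h2'
  · exact absurd (h1.trans h2'.symm) hne'
  · rw [h1, h2']
  · rw [h1, h2']; exact (pc_symm k hne).symm
  · exact absurd (h1.trans h2'.symm) hne'
end Col

/-- **Theorem.** Let `k` be odd, and let `G` be the union of `k+1` `k`-cliques
`K 0, …, K k` such that (i) the cliques intersect pairwise in at most one vertex and
(ii) every vertex of `G` belongs to at most 2 of the cliques. Then `χ(G) = k`. -/
theorem chromaticNumber_union_of_succ_cliques {V : Type*} [Fintype V] [DecidableEq V]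
    (G : SimpleGraph V) (k : ℕ) (hk : Odd k)
    (K : Fin (k + 1) → Finset V)
    (hcard : ∀ t, (K t).card = k)
    (hclique : ∀ t, ∀ a ∈ K t, ∀ b ∈ K t, a ≠ b → G.Adj a b)
    (hvert : ∀ v : V, ∃ t, v ∈ K t)
    (hedge : ∀ u v : V, G.Adj u v → ∃ t, u ∈ K t ∧ v ∈ K t)
    (hpair : ∀ t t' : Fin (k + 1), t ≠ t' → (K t ∩ K t').card ≤ 1)
    (hshare : ∀ v : V, (univ.filter (fun t => v ∈ K t)).card ≤ 2) :
    G.chromaticNumber = (k : ℕ∞) := by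
  classical
  haveI : NeZero k := ⟨hk.pos.ne'⟩
  -- abbreviations
  have hT2 : ∀ v : V, (Tset k K v).card ≤ 2 := fun v => hshare v
  have hT1 : ∀ v : V, (Tset k K v).Nonempty := fun v => by
    obtain ⟨t, ht⟩ := hvert v
    exact ⟨t, (mem_Tset k K).mpr ht⟩
  -- pair representation for shared vertices
  have hpairrep : ∀ (v : V) (t : Fin (k+1)), v ∈ K t → 1 < (Tset k K v).card →
      ∃ t', t' ≠ t ∧ v ∈ K t' ∧ Tset k K v = {t, t'} := by
    intro v t hv h2
    have hc2 : (Tset k K v).card = 2 := le_antisymm (hT2 v) h2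
    obtain ⟨a, b, hab, hTv⟩ := card_eq_two.mp hc2
    have ht : t ∈ Tset k K v := (mem_Tset k K).mpr hv
    rw [hTv] at ht
    simp only [mem_insert, mem_singleton] at ht
    rcases ht with rfl | rfl
    · refine ⟨b, hab.symm, ?_, hTv⟩
      have : b ∈ Tset k K v := by rw [hTv]; simp
      exact (mem_Tset k K).mp this
    · refine ⟨a, hab, ?_, by rw [hTv, pair_comm]⟩
      have : a ∈ Tset k K v := by rw [hTv]; simp
      exact (mem_Tset k K).mp this
  -- the shared part and private part of each clique
  set Sh : Fin (k+1) → Finset V := fun t => (K t).filter fun v => 1 < (Tset k K v).card with hSh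
  set Pv : Fin (k+1) → Finset V := fun t => (K t).filter fun v => ¬ 1 < (Tset k K v).card with hPvdef
  -- injectivity of sc on Sh t
  have hscinj : ∀ t : Fin (k+1), ∀ u ∈ Sh t, ∀ v ∈ Sh t, sc k K u = sc k K v → u = v := by
    intro t u hu v hv heq
    rw [hSh] at hu hv
    simp only [mem_filter] at hu hv
    obtain ⟨tu, htu1, htu2, htu3⟩ := hpairrep u t hu.1 hu.2
    obtain ⟨tv, htv1, htv2, htv3⟩ := hpairrep v t hv.1 hv.2
    rw [sc_pair k K htu1.symm htu3, sc_pair k K htv1.symm htv3] at heq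
    by_cases htt : tu = tv
    · subst htt
      have h1 : u ∈ K t ∩ K tu := mem_inter.mpr ⟨hu.1, htu2⟩
      have h2 : v ∈ K t ∩ K tu := mem_inter.mpr ⟨hv.1, htv2⟩
      exact card_le_one.mp (hpair t tu (Ne.symm htu1)) u h1 v h2
    · exact absurd heq (pc_inj k hk htu1.symm htv1.symm htt)
  -- cardinality equality for private parts
  have hcardeq : ∀ t : Fin (k+1),
      Fintype.card (Pv t) = Fintype.card ((univ \ (Sh t).image (sc k K) : Finset (ZMod k))) := by
    intro t
    rw [Fintype.card_coe, Fintype.card_coe]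
    have hsplit : (Sh t).card + (Pv t).card = k := by
      rw [hSh, hPvdef]
      rw [Finset.card_filter_add_card_filter_not]
      exact hcard t
    have himg : ((Sh t).image (sc k K)).card = (Sh t).card :=
      card_image_of_injOn (fun u hu v hv => hscinj t u hu v hv)
    have hsub : (Sh t).image (sc k K) ⊆ univ := subset_univ _
    rw [card_sdiff_of_subset hsub, himg]
    have : (univ : Finset (ZMod k)).card = k := by
      rw [card_univ, ZMod.card]
    omega
  -- choose private colorings
  have hg : ∀ t : Fin (k+1), ∃ g : V → ZMod k,
      (∀ u ∈ Pv t, ∀ v ∈ Pv t, g u = g v → u = v) ∧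
      (∀ v ∈ Pv t, g v ∉ (Sh t).image (sc k K)) := by
    intro t
    have e := Fintype.equivOfCardEq (hcardeq t)
    refine ⟨fun v => if hv : v ∈ Pv t then (e ⟨v, hv⟩ : ZMod k) else 0, ?_, ?_⟩
    · intro u hu v hv heq
      dsimp only at heq
      rw [dif_pos hu, dif_pos hv] at heq
      have := e.injective (Subtype.coe_injective heq)
      exact congrArg Subtype.val this
    · intro v hv
      dsimp only
      rw [dif_pos hv]
      have := (e ⟨v, hv⟩).2
      rw [mem_sdiff] at this
      exact this.2
  choose g hg1 hg2 using hg
  -- the clique of a private vertex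
  have hcq_uniq : ∀ (v : V) (t t' : Fin (k+1)), v ∈ K t → v ∈ K t' →
      ¬ 1 < (Tset k K v).card → t = t' := by
    intro v t t' ht ht' h2
    have hc1 : (Tset k K v).card = 1 :=
      le_antisymm (by omega) (card_pos.mpr (hT1 v))
    obtain ⟨a, ha⟩ := card_eq_one.mp hc1
    have h1 : t ∈ Tset k K v := (mem_Tset k K).mpr ht
    have h1' : t' ∈ Tset k K v := (mem_Tset k K).mpr ht'
    rw [ha, mem_singleton] at h1 h1'
    rw [h1, h1']
  let cq : V → Fin (k+1) := fun v => (Tset k K v).min' (hT1 v)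
  have hcq : ∀ v : V, v ∈ K (cq v) := fun v => (mem_Tset k K).mp (min'_mem _ _)
  -- the coloring
  let f : V → ZMod k := fun v => if 1 < (Tset k K v).card then sc k K v else g (cq v) v
  have hinj : ∀ t : Fin (k+1), ∀ u ∈ K t, ∀ v ∈ K t, u ≠ v → f u ≠ f v := by
    intro t u hu v hv huv hfeq
    by_cases h2u : 1 < (Tset k K u).card <;> by_cases h2v : 1 < (Tset k K v).card
    · simp only [f, if_pos h2u, if_pos h2v] at hfeq
      exact huv (hscinj t u (mem_filter.mpr ⟨hu, h2u⟩) v (mem_filter.mpr ⟨hv, h2v⟩) hfeq)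
    · have htv : t = cq v := hcq_uniq v t (cq v) hv (hcq v) h2v
      simp only [f, if_pos h2u, if_neg h2v] at hfeq
      have hmem : sc k K u ∈ (Sh t).image (sc k K) :=
        mem_image_of_mem _ (mem_filter.mpr ⟨hu, h2u⟩)
      have hnot : g (cq v) v ∉ (Sh (cq v)).image (sc k K) :=
        hg2 (cq v) v (mem_filter.mpr ⟨hcq v, h2v⟩)
      rw [htv] at hmem
      rw [hfeq] at hmem
      exact hnot hmem
    · have htu : t = cq u := hcq_uniq u t (cq u) hu (hcq u) h2u
      simp only [f, if_neg h2u, if_pos h2v] at hfeq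
      have hmem : sc k K v ∈ (Sh t).image (sc k K) :=
        mem_image_of_mem _ (mem_filter.mpr ⟨hv, h2v⟩)
      have hnot : g (cq u) u ∉ (Sh (cq u)).image (sc k K) :=
        hg2 (cq u) u (mem_filter.mpr ⟨hcq u, h2u⟩)
      rw [htu] at hmem
      rw [← hfeq] at hmem
      exact hnot hmem
    · have htu : t = cq u := hcq_uniq u t (cq u) hu (hcq u) h2u
      have htv : t = cq v := hcq_uniq v t (cq v) hv (hcq v) h2v
      simp only [f, if_neg h2u, if_neg h2v] at hfeq
      rw [← htu, ← htv] at hfeq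
      exact huv (hg1 t u (mem_filter.mpr ⟨hu, h2u⟩) v (mem_filter.mpr ⟨hv, h2v⟩) hfeq)
  -- colorable
  have hcolor : G.Colorable k := by
    have C : G.Coloring (ZMod k) := SimpleGraph.Coloring.mk f (by
      intro u v hadj
      obtain ⟨t, hu, hv⟩ := hedge u v hadj
      exact hinj t u hu v hv (G.ne_of_adj hadj))
    have := C.colorable
    rwa [ZMod.card] at this
  -- conclude
  refine le_antisymm ?_ ?_
  · exact hcolor.chromaticNumber_le
  · have hclq : G.IsClique (K 0 : Set V) := by
      intro a ha b hb hab
      exact hclique 0 a ha b hb hab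
    have := hclq.card_le_chromaticNumber
    rwa [hcard 0] at this
end

section
/- Suppose G is a union of k-cliques K(1),...,K(r) and G' is the induced subgraph of G on the set V' of vertices belonging to exactly two of the cliques. If every vertex of G belongs to at most two of the cliques and G' admits a proper k-coloring, then G admits a proper k-coloring, i.e., χ(G) ≤ k. -/
open Finset

/-- **Extension step.** Suppose `G` is the union of `k`-cliques `K 0, …, K (r-1)`, every
vertex belongs to at most two of the cliques, `V'` is the set of vertices belonging to
exactly two of the cliques, and `G'` is the induced subgraph on `V'`.  If `G'` admits a
proper `k`-coloring, then so does `G`; in particular `χ(G) ≤ k`. -/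
theorem coloring_extends_from_shared_vertices {V : Type*} [Fintype V] [DecidableEq V]
    (G : SimpleGraph V) (k r : ℕ) (K : Fin r → Finset V)
    (hcard : ∀ t, (K t).card = k)
    (hclique : ∀ t, ∀ a ∈ K t, ∀ b ∈ K t, a ≠ b → G.Adj a b)
    (hvert : ∀ v : V, ∃ t, v ∈ K t)
    (hedge : ∀ u v : V, G.Adj u v → ∃ t, u ∈ K t ∧ v ∈ K t)
    (hshare : ∀ v : V, (univ.filter (fun t => v ∈ K t)).card ≤ 2)
    (hf : ∃ f : V → Fin k, ∀ u v : V,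
      (univ.filter (fun t => u ∈ K t)).card = 2 →
      (univ.filter (fun t => v ∈ K t)).card = 2 →
      G.Adj u v → f u ≠ f v) :
    ∃ g : V → Fin k, ∀ u v : V, G.Adj u v → g u ≠ g v := by
  classical
  obtain ⟨f, hfprop⟩ := hf
  set P : V → Prop := fun v => (univ.filter (fun t => v ∈ K t)).card = 2 with hP
  -- uniqueness of clique for non-doubly-covered vertices
  have huniq : ∀ v : V, ¬ P v → ∀ t t', v ∈ K t → v ∈ K t' → t = t' := by
    intro v hv t t' ht ht'
    have hle : (univ.filter (fun t => v ∈ K t)).card ≤ 1 := by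
      rcases Nat.lt_or_ge (univ.filter (fun t => v ∈ K t)).card 2 with h | h
      · omega
      · exact absurd (le_antisymm (hshare v) h) hv
    have := Finset.card_le_one.mp hle t (by simp [ht]) t' (by simp [ht'])
    exact this
  -- per-clique extension
  have hext : ∀ t : Fin r, ∃ gt : V → Fin k,
      (∀ v ∈ K t, P v → gt v = f v) ∧ Set.InjOn gt (K t) := by
    intro t
    set A : Finset V := (K t).filter (fun v => P v) with hA
    have hfinjA : Set.InjOn f A := by
      intro a ha b hb hab
      by_contra hne
      simp only [hA, mem_coe, mem_filter] at ha hb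
      exact hfprop a b ha.2 hb.2 (hclique t a ha.1 b hb.1 hne) hab
    have himg : (A.image f).card = A.card := Finset.card_image_of_injOn hfinjA
    set B : Finset V := K t \ A with hB
    set C : Finset (Fin k) := univ \ A.image f with hC
    have hAsub : A ⊆ K t := Finset.filter_subset _ _
    have hAcard : A.card ≤ k := (hcard t) ▸ Finset.card_le_card hAsub
    have hBC : B.card = C.card := by
      have h1 : B.card = k - A.card := by
        rw [hB, Finset.card_sdiff_of_subset hAsub, hcard t]
      have h2 : C.card = k - A.card := by
        rw [hC, Finset.card_sdiff_of_subset (Finset.subset_univ _), himg, Finset.card_univ,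
          Fintype.card_fin]
      omega
    obtain e := Finset.equivOfCardEq hBC
    refine ⟨fun v => if h : v ∈ B then (e ⟨v, h⟩ : Fin k) else f v, ?_, ?_⟩
    · intro v hv hPv
      have hvA : v ∈ A := Finset.mem_filter.mpr ⟨hv, hPv⟩
      have hvB : v ∉ B := fun h => (Finset.mem_sdiff.mp h).2 hvA
      exact dif_neg hvB
    · intro a ha b hb hab
      have hmem : ∀ x, x ∈ K t → x ∉ B → x ∈ A := by
        intro x hx hxB
        by_contra hxA
        exact hxB (Finset.mem_sdiff.mpr ⟨hx, hxA⟩)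
      by_cases haB : a ∈ B <;> by_cases hbB : b ∈ B
      · simp only [haB, hbB, dif_pos] at hab
        exact congrArg Subtype.val (e.injective (Subtype.ext hab))
      · exfalso
        have hbA : b ∈ A := hmem b hb hbB
        simp only [haB, hbB, dif_pos, dif_neg, not_false_iff] at hab
        have h1 : (e ⟨a, haB⟩ : Fin k) ∈ C := (e ⟨a, haB⟩).2
        rw [hab] at h1
        rw [hC] at h1
        exact (Finset.mem_sdiff.mp h1).2 (Finset.mem_image_of_mem f hbA)
      · exfalso
        have haA : a ∈ A := hmem a ha haB
        simp only [haB, hbB, dif_pos, dif_neg, not_false_iff] at hab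
        have h1 : (e ⟨b, hbB⟩ : Fin k) ∈ C := (e ⟨b, hbB⟩).2
        rw [← hab] at h1
        rw [hC] at h1
        exact (Finset.mem_sdiff.mp h1).2 (Finset.mem_image_of_mem f haA)
      · simp only [haB, hbB, dif_neg, not_false_iff] at hab
        exact hfinjA (hmem a ha haB) (hmem b hb hbB) hab
  choose gt hgt1 hgt2 using hext
  refine ⟨fun v => if P v then f v else gt (Classical.choose (hvert v)) v, ?_⟩
  intro u v hadj
  obtain ⟨t, hu, hv⟩ := hedge u v hadj
  have hne : u ≠ v := G.ne_of_adj hadj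
  have key : ∀ w, w ∈ K t →
      (if P w then f w else gt (Classical.choose (hvert w)) w) = gt t w := by
    intro w hw
    by_cases hPw : P w
    · rw [if_pos hPw]
      exact (hgt1 t w hw hPw).symm
    · rw [if_neg hPw]
      have := huniq w hPw _ t (Classical.choose_spec (hvert w)) hw
      rw [this]
  intro h
  apply hne
  apply hgt2 t hu hv
  rw [← key u hu, ← key v hv]
  exact h
end
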